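/- Let G be a simple directed graph on [n] and σ ⊆ [n]. Suppose k graphically dominates j with respect to σ (j,k ∈ σ distinct): (1) for every i ∈ σ\{j,k}, i→j implies i→k; (2) j→k; (3) k̸→j. Let W = W(G,ε,δ) with legal parameters, and let x* ∈ ℝ^n_{≥0} be a fixed point of the CTLN dynamics (i.e., x*_i = [Σ_l W_{il} x*_l + θ]_+ for all i, θ > 0). Then supp(x*) ≠ σ. -/

import Mathlib

/-!
Suppose the support of `x` is `σ`. Then the fixed-point equations hold with equality at `j` and `k`,
so `x k - x j = ∑ l, (W k l - W j l) * x l`. Domination makes every term with `l ≠ j, k` nonnegative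
(off `σ` because `x l = 0`, on `σ` because `l → j` forces `l → k`), while the terms at `j` and `k`
contribute `(ε - 1) x j + (1 + δ) x k`. Hence `ε x j + δ x k ≤ 0`, which is impossible since
`x j, x k, ε, δ > 0`.
-/

/-- The CTLN weight matrix `W(G, ε, δ)`, where `E l i` means `l → i`. -/
def ctlnMatrix {n : ℕ} (E : Fin n → Fin n → Prop) [DecidableRel E] (ε δ : ℝ) :
    Matrix (Fin n) (Fin n) ℝ :=
  Matrix.of fun i l => if i = l then 0 else if E l i then -1 + ε else -1 - δ

section ctlnMatrix

variable {n : ℕ} {E : Fin n → Fin n → Prop} [DecidableRel E] {ε δ : ℝ}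

@[simp]
lemma ctlnMatrix_apply_self (i : Fin n) : ctlnMatrix E ε δ i i = 0 := by
  simp [ctlnMatrix]

lemma ctlnMatrix_apply_of_adj {i l : Fin n} (hil : i ≠ l) (h : E l i) :
    ctlnMatrix E ε δ i l = -1 + ε := by
  simp [ctlnMatrix, hil, h]

lemma ctlnMatrix_apply_of_not_adj {i l : Fin n} (hil : i ≠ l) (h : ¬ E l i) :
    ctlnMatrix E ε δ i l = -1 - δ := by
  simp [ctlnMatrix, hil, h]

lemma ctlnMatrix_apply_le_apply {i i' l : Fin n} (hil : i ≠ l) (hi'l : i' ≠ l)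
    (hadj : E l i → E l i') (hεδ : 0 ≤ ε + δ) :
    ctlnMatrix E ε δ i l ≤ ctlnMatrix E ε δ i' l := by
  by_cases h : E l i
  · rw [ctlnMatrix_apply_of_adj hil h, ctlnMatrix_apply_of_adj hi'l (hadj h)]
  · rw [ctlnMatrix_apply_of_not_adj hil h]
    by_cases h' : E l i'
    · rw [ctlnMatrix_apply_of_adj hi'l h']
      linarith
    · rw [ctlnMatrix_apply_of_not_adj hi'l h']

end ctlnMatrix

lemma eq_of_eq_max_zero_of_pos {a b : ℝ} (h : a = max 0 b) (ha : 0 < a) : a = b := by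
  rcases max_choice 0 b with h0 | hb
  · linarith [h.trans h0]
  · exact h.trans hb

lemma sum_mul_sub_sum_mul_ge {ι : Type*} [Fintype ι] [DecidableEq ι] (W : Matrix ι ι ℝ)
    (x : ι → ℝ) {j k : ι} (hjk : j ≠ k) (hx : ∀ l, 0 ≤ x l)
    (hle : ∀ l, l ≠ j → l ≠ k → 0 < x l → W j l ≤ W k l) :
    (W k j - W j j) * x j + (W k k - W j k) * x k ≤
      ∑ l, W k l * x l - ∑ l, W j l * x l := by
  have hk : k ∈ Finset.univ.erase j := Finset.mem_erase.mpr ⟨hjk.symm, Finset.mem_univ k⟩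
  have hrest : 0 ≤ ∑ l ∈ (Finset.univ.erase j).erase k, (W k l - W j l) * x l := by
    refine Finset.sum_nonneg fun l hl => ?_
    have hlk := Finset.ne_of_mem_erase hl
    have hlj := Finset.ne_of_mem_erase (Finset.mem_of_mem_erase hl)
    rcases (hx l).eq_or_lt with h0 | hpos
    · simp [← h0]
    · exact mul_nonneg (sub_nonneg.mpr (hle l hlj hlk hpos)) hpos.le
  rw [← Finset.sum_sub_distrib, ← Finset.add_sum_erase _ _ (Finset.mem_univ j),
    ← Finset.add_sum_erase _ _ hk]
  simp only [← sub_mul]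
  linarith

lemma ctlnMatrix_sum_sub_sum_ge {n : ℕ} {E : Fin n → Fin n → Prop} [DecidableRel E]
    {σ : Finset (Fin n)} {j k : Fin n} (hjk : j ≠ k)
    (h1 : ∀ i ∈ σ, i ≠ j → i ≠ k → E i j → E i k) (h2 : E j k) (h3 : ¬ E k j)
    {ε δ : ℝ} (hεδ : 0 ≤ ε + δ) {x : Fin n → ℝ} (hx : ∀ l, 0 ≤ x l)
    (hsupp : ∀ l, 0 < x l → l ∈ σ) :
    (ε - 1) * x j + (1 + δ) * x k ≤
      ∑ l, ctlnMatrix E ε δ k l * x l - ∑ l, ctlnMatrix E ε δ j l * x l := by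
  have hle : ∀ l, l ≠ j → l ≠ k → 0 < x l → ctlnMatrix E ε δ j l ≤ ctlnMatrix E ε δ k l :=
    fun l hlj hlk hpos =>
      ctlnMatrix_apply_le_apply hlj.symm hlk.symm (h1 l (hsupp l hpos) hlj hlk) hεδ
  have h := sum_mul_sub_sum_mul_ge _ x hjk hx hle
  rw [ctlnMatrix_apply_of_adj hjk.symm h2, ctlnMatrix_apply_of_not_adj hjk h3,
    ctlnMatrix_apply_self, ctlnMatrix_apply_self] at h
  linarith

theorem stmt16_general (n : ℕ) (E : Fin n → Fin n → Prop) [DecidableRel E]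
    (σ : Finset (Fin n)) (j k : Fin n) (hj : j ∈ σ) (hk : k ∈ σ) (hjk : j ≠ k)
    (h1 : ∀ i ∈ σ, i ≠ j → i ≠ k → E i j → E i k) (h2 : E j k) (h3 : ¬ E k j)
    (ε δ θ : ℝ) (hε : 0 < ε) (hε1 : ε < 1) (hδ : ε / (1 - ε) < δ)
    (W : Matrix (Fin n) (Fin n) ℝ)
    (hW : W = Matrix.of fun i l => if i = l then 0 else if E l i then -1 + ε else -1 - δ)
    (x : Fin n → ℝ)
    (hx : ∀ i, x i = max 0 ((∑ l, W i l * x l) + θ)) :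
    {i | 0 < x i} ≠ ↑σ := by
  obtain rfl : W = ctlnMatrix E ε δ := hW
  intro hsupp
  have hσ : ∀ l, 0 < x l ↔ l ∈ σ := fun l => by simpa using Set.ext_iff.mp hsupp l
  have hx0 : ∀ l, 0 ≤ x l := fun l => (hx l).symm ▸ le_max_left _ _
  have hδ0 : 0 < δ := (div_pos hε (by linarith)).trans hδ
  have hxj : 0 < x j := (hσ j).mpr hj
  have hxk : 0 < x k := (hσ k).mpr hk
  have hxj_eq := eq_of_eq_max_zero_of_pos (hx j) hxj
  have hxk_eq := eq_of_eq_max_zero_of_pos (hx k) hxk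
  have hgap := ctlnMatrix_sum_sub_sum_ge hjk h1 h2 h3 (by linarith : 0 ≤ ε + δ) hx0
    fun l => (hσ l).mp
  linarith [mul_pos hε hxj, mul_pos hδ0 hxk]

theorem stmt16 (n : ℕ) (E : Fin n → Fin n → Prop) [DecidableRel E] (hirr : ∀ i, ¬ E i i)
    (σ : Finset (Fin n)) (j k : Fin n) (hj : j ∈ σ) (hk : k ∈ σ) (hjk : j ≠ k)
    (h1 : ∀ i ∈ σ, i ≠ j → i ≠ k → E i j → E i k) (h2 : E j k) (h3 : ¬ E k j)
    (ε δ θ : ℝ) (hε : 0 < ε) (hε1 : ε < 1) (hδ : ε / (1 - ε) < δ) (hθ : 0 < θ)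
    (W : Matrix (Fin n) (Fin n) ℝ)
    (hW : W = Matrix.of fun i l => if i = l then 0 else if E l i then -1 + ε else -1 - δ)
    (x : Fin n → ℝ) (hxnn : ∀ i, 0 ≤ x i)
    (hx : ∀ i, x i = max 0 ((∑ l, W i l * x l) + θ)) :
    {i | 0 < x i} ≠ ↑σ :=
  stmt16_general n E σ j k hj hk hjk h1 h2 h3 ε δ θ hε hε1 hδ W hW x hx
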